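/- Let H_1 be an r_1-regular graph on n_1 vertices and H_2 an r_2-regular graph on n_2 vertices with n_1 - r_2 = n_2 - r_1 > max{r_1, r_2}. Then the join G = H_1 ∇ H_2 has least adjacency eigenvalue λ_min(G) = r_1 - n_2, and this eigenvalue has the partition vector p_{V(H_1)} as an eigenvector; consequently G is A-exact. -/

import Mathlib

open Finset Matrix BigOperators

set_option linter.unusedSectionVars false

variable {V : Type*} [Fintype V] [DecidableEq V]

/-- Number of edges of `G` with exactly one endpoint in `S` (each unordered edge counted once,
as the ordered pair going out of `S`). -/
def cutNum (G : SimpleGraph V) [DecidableRel G.Adj] (S : Finset V) : ℕ :=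
  (Finset.univ.filter (fun p : V × V => G.Adj p.1 p.2 ∧ p.1 ∈ S ∧ p.2 ∉ S)).card

/-- Number of edges of `G` with both endpoints in `S` or both outside `S`. -/
def cohNum (G : SimpleGraph V) [DecidableRel G.Adj] (S : Finset V) : ℕ :=
  G.edgeFinset.card - cutNum G S

/-- The maximum cut of `G`. -/
def mcut (G : SimpleGraph V) [DecidableRel G.Adj] : ℕ :=
  Finset.univ.sup (fun S : Finset V => cutNum G S)

/-- The ±1 partition vector of a vertex subset `S`. -/
def pvec (S : Finset V) : V → ℝ := fun v => if v ∈ S then 1 else -1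

/-- The signless Laplacian matrix `Q = D + A` of a graph. -/
def signlessLap (G : SimpleGraph V) [DecidableRel G.Adj] : Matrix V V ℝ :=
  G.degMatrix ℝ + G.adjMatrix ℝ

lemma isHermitian_adj (G : SimpleGraph V) [DecidableRel G.Adj] :
    (G.adjMatrix ℝ).IsHermitian := by
  rw [IsHermitian, conjTranspose_eq_transpose_of_trivial]
  exact SimpleGraph.isSymm_adjMatrix G

lemma isHermitian_lap (G : SimpleGraph V) [DecidableRel G.Adj] :
    (G.lapMatrix ℝ).IsHermitian := by
  rw [IsHermitian, conjTranspose_eq_transpose_of_trivial]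
  exact SimpleGraph.isSymm_lapMatrix ℝ G

lemma isHermitian_signlessLap (G : SimpleGraph V) [DecidableRel G.Adj] :
    (signlessLap G).IsHermitian := by
  rw [IsHermitian, conjTranspose_eq_transpose_of_trivial]
  exact (SimpleGraph.isSymm_degMatrix ℝ G).add (SimpleGraph.isSymm_adjMatrix G)

/-- The spanning subgraph of `G` consisting of the edges between `S` and its complement. -/
def crossGraph (G : SimpleGraph V) (S : Finset V) : SimpleGraph V where
  Adj u v := G.Adj u v ∧ ((u ∈ S) ↔ (v ∉ S))
  symm := ⟨fun u v h => ⟨h.1.symm, by tauto⟩⟩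
  loopless := ⟨fun v h => G.loopless.1 v h.1⟩

/-- The spanning subgraph of `G` consisting of the edges inside `S` or inside its complement. -/
def insideGraph (G : SimpleGraph V) (S : Finset V) : SimpleGraph V where
  Adj u v := G.Adj u v ∧ ((u ∈ S) ↔ (v ∈ S))
  symm := ⟨fun u v h => ⟨h.1.symm, h.2.symm⟩⟩
  loopless := ⟨fun v h => G.loopless.1 v h.1⟩

instance (G : SimpleGraph V) [DecidableRel G.Adj] (S : Finset V) :
    DecidableRel (crossGraph G S).Adj := fun _ _ => inferInstanceAs (Decidable (_ ∧ _))

instance (G : SimpleGraph V) [DecidableRel G.Adj] (S : Finset V) :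
    DecidableRel (insideGraph G S).Adj := fun _ _ => inferInstanceAs (Decidable (_ ∧ _))

/-- The second largest value (with multiplicity) of a finitely indexed family of reals. -/
noncomputable def secondLargest (f : V → ℝ) : ℝ :=
  (Multiset.sort (Finset.univ.val.map f) (· ≤ ·)).getD (Fintype.card V - 2) 0

/-- The join of two graphs: disjoint union plus all edges in between. -/
def joinGraph {α β : Type*} (H₁ : SimpleGraph α) (H₂ : SimpleGraph β) :
    SimpleGraph (α ⊕ β) where
  Adj x y :=
    match x, y with
    | Sum.inl u, Sum.inl v => H₁.Adj u v
    | Sum.inr u, Sum.inr v => H₂.Adj u v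
    | Sum.inl _, Sum.inr _ => True
    | Sum.inr _, Sum.inl _ => True
  symm := ⟨by rintro (u | u) (v | v) h <;> first | exact h.symm | trivial⟩
  loopless := ⟨by
    rintro (u | u) h
    · exact H₁.loopless.1 u h
    · exact H₂.loopless.1 u h⟩

instance {α β : Type*} (H₁ : SimpleGraph α) (H₂ : SimpleGraph β)
    [DecidableRel H₁.Adj] [DecidableRel H₂.Adj] :
    DecidableRel (joinGraph H₁ H₂).Adj := fun x y =>
  match x, y with
  | Sum.inl u, Sum.inl v => inferInstanceAs (Decidable (H₁.Adj u v))
  | Sum.inr u, Sum.inr v => inferInstanceAs (Decidable (H₂.Adj u v))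
  | Sum.inl _, Sum.inr _ => inferInstanceAs (Decidable True)
  | Sum.inr _, Sum.inl _ => inferInstanceAs (Decidable True)

/-!
Write `λ = r₁ - n₂ = r₂ - n₁`. A vertex of `H₁` sees `r₁` neighbours with sign `+1` and `n₂` with
sign `-1` in the `±1` vector `p` of the bipartition (and symmetrically for `H₂`), so `A p = λ p`.

For the lower bound `λ ‖x‖² ≤ xᵀ A x`, split `x` into its restrictions `x₁`, `x₂` with sums `s₁`,
`s₂`, so that `xᵀ A x = x₁ᵀ A₁ x₁ + x₂ᵀ A₂ x₂ + 2 s₁ s₂`. For an `r`-regular graph on `n` vertices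
and `μ ≤ -r`, centring `x` and using that the adjacency spectrum lies in `[-r, r]` gives
`n (xᵀ A x - μ ‖x‖²) ≥ (r - μ) s²`. With `μ = λ` the quantities `Pᵢ = xᵢᵀ Aᵢ xᵢ - λ ‖xᵢ‖²`
satisfy `n₁ P₁ ≥ n₂ s₁²` and `n₂ P₂ ≥ n₁ s₂²`, hence
`n₁ n₂ (P₁ + P₂ + 2 s₁ s₂) ≥ (n₂ s₁ + n₁ s₂)² ≥ 0`.

Finally `pᵀ A p = 2m - 4 cut(S)` for the `±1` vector of any `S`, so the lower bound at a maximum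
cut together with equality at the bipartition gives `λ n = 2m - 4 mcut`.
-/

namespace SimpleGraph

section Regular

variable {α : Type*} [Fintype α] {G : SimpleGraph α} [DecidableRel G.Adj] {r : ℕ}

theorem IsRegularOfDegree.dotProduct_mulVec_adjMatrix_le (hG : G.IsRegularOfDegree r)
    (x : α → ℝ) : x ⬝ᵥ (G.adjMatrix ℝ *ᵥ x) ≤ r * (x ⬝ᵥ x) := by
  classical
  have hL := (G.posSemidef_lapMatrix ℝ).dotProduct_mulVec_nonneg x
  rw [star_trivial, lapMatrix, sub_mulVec, dotProduct_sub, dotProduct_mulVec_degMatrix] at hL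
  simp only [hG.degree_eq, mul_assoc, ← Finset.mul_sum] at hL
  exact sub_nonneg.mp hL

theorem IsRegularOfDegree.neg_mul_le_dotProduct_mulVec_adjMatrix (hG : G.IsRegularOfDegree r)
    (x : α → ℝ) : -(r * (x ⬝ᵥ x)) ≤ x ⬝ᵥ (G.adjMatrix ℝ *ᵥ x) := by
  -- the entries of `A` are nonnegative, so `xᵀ A x ≥ -|x|ᵀ A |x|`
  let y : α → ℝ := fun i => |x i|
  have hyy : y ⬝ᵥ y = x ⬝ᵥ x := by simp only [y, dotProduct, abs_mul_abs_self]
  have hxy : -(y ⬝ᵥ (G.adjMatrix ℝ *ᵥ y)) ≤ x ⬝ᵥ (G.adjMatrix ℝ *ᵥ x) := by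
    simp only [dotProduct_mulVec_adjMatrix, ← Finset.sum_neg_distrib]
    refine Finset.sum_le_sum fun i _ => Finset.sum_le_sum fun j _ => ?_
    split_ifs
    · rw [← abs_mul]; exact neg_abs_le _
    · simp
  have hy := hG.dotProduct_mulVec_adjMatrix_le y
  rw [hyy] at hy
  linarith

theorem IsRegularOfDegree.mul_sq_sum_le (hG : G.IsRegularOfDegree r) {μ : ℝ} (hμ : μ ≤ -r)
    (x : α → ℝ) :
    (r - μ) * (∑ i, x i) ^ 2 ≤
      Fintype.card α * (x ⬝ᵥ (G.adjMatrix ℝ *ᵥ x) - μ * (x ⬝ᵥ x)) := by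
  set n : ℝ := (Fintype.card α : ℝ)
  set s := ∑ i, x i
  have hcs : s ^ 2 ≤ n * (x ⬝ᵥ x) := by
    have h := sq_sum_le_card_mul_sum_sq (s := (Finset.univ : Finset α)) (f := x)
    simpa only [Finset.card_univ, dotProduct, sq] using h
  have hcentered : 2 * r * s ^ 2 ≤ n * (x ⬝ᵥ (G.adjMatrix ℝ *ᵥ x) + r * (x ⬝ᵥ x)) := by
    by_cases hn0 : n = 0
    · rw [hn0] at hcs ⊢
      nlinarith [sq_nonneg s]
    have hn : 0 < n := lt_of_le_of_ne (by positivity) (Ne.symm hn0)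
    have hA1 : G.adjMatrix ℝ *ᵥ 1 = (r : ℝ) • 1 := by
      ext v
      simpa using adjMatrix_mulVec_const_apply_of_regular hG (a := (1 : ℝ)) (v := v)
    have h1A : 1 ᵥ* G.adjMatrix ℝ = (r : ℝ) • 1 := by
      rw [← mulVec_transpose, transpose_adjMatrix, hA1]
    have hz : ∑ i, (n • x - s • 1) i = 0 := by
      simp only [Pi.sub_apply, Pi.smul_apply, Pi.one_apply, smul_eq_mul, mul_one,
        Finset.sum_sub_distrib, ← Finset.mul_sum, Finset.sum_const, Finset.card_univ, nsmul_eq_mul]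
      ring
    -- the lower bound `-r ‖z‖² ≤ zᵀ A z` for the centred vector `z = n x - s 𝟙`
    have key := hG.neg_mul_le_dotProduct_mulVec_adjMatrix (n • x - s • 1)
    simp only [mulVec_sub, mulVec_smul, hA1, dotProduct_sub, sub_dotProduct, dotProduct_smul,
      smul_dotProduct, dotProduct_mulVec 1, h1A, dotProduct_one, one_dotProduct, smul_eq_mul,
      hz] at key
    refine le_of_mul_le_mul_left ?_ hn
    linear_combination key
  nlinarith [mul_le_mul_of_nonneg_left hcs (by linarith : (0 : ℝ) ≤ -r - μ)]

end Regular

section Join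

variable {α β : Type*} {H₁ : SimpleGraph α} {H₂ : SimpleGraph β}

@[simp]
theorem joinGraph_adj_inl_inl {u v : α} : (joinGraph H₁ H₂).Adj (.inl u) (.inl v) ↔ H₁.Adj u v :=
  Iff.rfl

@[simp]
theorem joinGraph_adj_inr_inr {u v : β} : (joinGraph H₁ H₂).Adj (.inr u) (.inr v) ↔ H₂.Adj u v :=
  Iff.rfl

@[simp]
theorem joinGraph_adj_inl_inr {u : α} {v : β} : (joinGraph H₁ H₂).Adj (.inl u) (.inr v) :=
  trivial

@[simp]
theorem joinGraph_adj_inr_inl {u : β} {v : α} : (joinGraph H₁ H₂).Adj (.inr u) (.inl v) :=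
  trivial

variable [Fintype α] [Fintype β] [DecidableRel H₁.Adj] [DecidableRel H₂.Adj] {r₁ r₂ : ℕ}

theorem dotProduct_mulVec_adjMatrix_joinGraph (x : α ⊕ β → ℝ) :
    x ⬝ᵥ ((joinGraph H₁ H₂).adjMatrix ℝ *ᵥ x) =
      (x ∘ Sum.inl) ⬝ᵥ (H₁.adjMatrix ℝ *ᵥ (x ∘ Sum.inl)) +
        (x ∘ Sum.inr) ⬝ᵥ (H₂.adjMatrix ℝ *ᵥ (x ∘ Sum.inr)) +
        2 * (∑ i, x (.inl i)) * ∑ j, x (.inr j) := by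
  simp only [dotProduct_mulVec_adjMatrix, Fintype.sum_sum_type, Function.comp_apply,
    joinGraph_adj_inl_inl, joinGraph_adj_inr_inr, joinGraph_adj_inl_inr, joinGraph_adj_inr_inl,
    if_true, Finset.sum_add_distrib]
  have hcross : ∑ i, ∑ j, x (.inr i) * x (.inl j) = (∑ i, x (.inl i)) * ∑ j, x (.inr j) := by
    rw [Finset.sum_mul_sum, Finset.sum_comm]
    exact Finset.sum_congr rfl fun _ _ => Finset.sum_congr rfl fun _ _ => mul_comm _ _
  rw [hcross, ← Finset.sum_mul_sum]
  ring

theorem joinGraph_adjMatrix_mulVec_pvec [DecidableEq α] [DecidableEq β]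
    (hH₁ : H₁.IsRegularOfDegree r₁) (hH₂ : H₂.IsRegularOfDegree r₂)
    (h : (Fintype.card α : ℝ) - r₂ = Fintype.card β - r₁) :
    (joinGraph H₁ H₂).adjMatrix ℝ *ᵥ pvec (univ.image Sum.inl) =
      ((r₁ : ℝ) - Fintype.card β) • pvec (univ.image Sum.inl) := by
  ext (u | u) <;>
    simp [mulVec, dotProduct, Fintype.sum_sum_type, pvec, adjMatrix_apply,
      ← neighborFinset_eq_filter, hH₁.degree_eq, hH₂.degree_eq] <;>
    linarith

theorem joinGraph_mul_dotProduct_self_le (hH₁ : H₁.IsRegularOfDegree r₁)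
    (hH₂ : H₂.IsRegularOfDegree r₂) (h : (Fintype.card α : ℝ) - r₂ = Fintype.card β - r₁)
    (hr₁ : (r₁ : ℝ) < Fintype.card β - r₁) (hr₂ : (r₂ : ℝ) < Fintype.card β - r₁)
    (x : α ⊕ β → ℝ) :
    ((r₁ : ℝ) - Fintype.card β) * (x ⬝ᵥ x) ≤ x ⬝ᵥ ((joinGraph H₁ H₂).adjMatrix ℝ *ᵥ x) := by
  have hn₁ : (0 : ℝ) < Fintype.card α := by linarith [(Nat.cast_nonneg r₂ : (0 : ℝ) ≤ r₂)]
  have hn₂ : (0 : ℝ) < Fintype.card β := by linarith [(Nat.cast_nonneg r₁ : (0 : ℝ) ≤ r₁)]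
  have h₁ := hH₁.mul_sq_sum_le (μ := r₁ - Fintype.card β) (by linarith) (x ∘ Sum.inl)
  have h₂ := hH₂.mul_sq_sum_le (μ := r₁ - Fintype.card β) (by linarith) (x ∘ Sum.inr)
  have hxx : x ⬝ᵥ x = (x ∘ Sum.inl) ⬝ᵥ (x ∘ Sum.inl) + (x ∘ Sum.inr) ⬝ᵥ (x ∘ Sum.inr) :=
    Fintype.sum_sum_type _
  rw [dotProduct_mulVec_adjMatrix_joinGraph, hxx]
  simp only [Function.comp_apply] at h₁ h₂ ⊢
  set n₁ : ℝ := (Fintype.card α : ℝ)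
  set n₂ : ℝ := (Fintype.card β : ℝ)
  set s₁ := ∑ i, x (.inl i)
  set s₂ := ∑ j, x (.inr j)
  set P₁ := (x ∘ Sum.inl) ⬝ᵥ (H₁.adjMatrix ℝ *ᵥ (x ∘ Sum.inl)) -
    (r₁ - n₂) * ((x ∘ Sum.inl) ⬝ᵥ (x ∘ Sum.inl))
  set P₂ := (x ∘ Sum.inr) ⬝ᵥ (H₂.adjMatrix ℝ *ᵥ (x ∘ Sum.inr)) -
    (r₁ - n₂) * ((x ∘ Sum.inr) ⬝ᵥ (x ∘ Sum.inr))
  rw [show (r₁ : ℝ) - (r₁ - n₂) = n₂ by ring] at h₁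
  rw [show (r₂ : ℝ) - (r₁ - n₂) = n₁ by linarith] at h₂
  -- `n₁ n₂ (P₁ + P₂ + 2 s₁ s₂) ≥ (n₂ s₁ + n₁ s₂)²`
  have key : 0 ≤ n₁ * n₂ * (P₁ + P₂ + 2 * s₁ * s₂) := by
    nlinarith [sq_nonneg (n₂ * s₁ + n₁ * s₂), mul_le_mul_of_nonneg_left h₁ hn₂.le,
      mul_le_mul_of_nonneg_left h₂ hn₁.le]
  linarith [(mul_nonneg_iff_of_pos_left (mul_pos hn₁ hn₂)).mp key]

end Join

end SimpleGraph

namespace Matrix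

variable {ι : Type*} [Fintype ι] {A : Matrix ι ι ℝ} {μ : ℝ}

theorem le_of_mulVec_eq_smul_of_forall_le (hle : ∀ x, μ * (x ⬝ᵥ x) ≤ x ⬝ᵥ (A *ᵥ x))
    {v : ι → ℝ} {t : ℝ} (hv : A *ᵥ v = t • v) (hv0 : v ≠ 0) : μ ≤ t := by
  have hvv : 0 < v ⬝ᵥ v := by
    simpa only [star_trivial] using dotProduct_self_star_pos_iff.mpr hv0
  have := hle v
  rw [hv, dotProduct_smul, smul_eq_mul] at this
  exact le_of_mul_le_mul_right this hvv

theorem IsHermitian.iInf_eigenvalues_eq [DecidableEq ι] (hA : A.IsHermitian)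
    (hle : ∀ x, μ * (x ⬝ᵥ x) ≤ x ⬝ᵥ (A *ᵥ x)) {v : ι → ℝ} (hv : A *ᵥ v = μ • v) (hv0 : v ≠ 0) :
    ⨅ i, hA.eigenvalues i = μ := by
  have hμ : μ ∈ Set.range hA.eigenvalues := by
    rw [← hA.spectrum_real_eq_range_eigenvalues, ← spectrum_toLin']
    exact (Module.End.hasEigenvalue_of_hasEigenvector
      ⟨Module.End.mem_eigenspace_iff.mpr (by simpa using hv), hv0⟩).mem_spectrum
  obtain ⟨i₀, hi₀⟩ := hμ
  have : Nonempty ι := ⟨i₀⟩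
  refine le_antisymm (hi₀ ▸ ciInf_le (Set.finite_range _).bddBelow i₀) (le_ciInf fun i => ?_)
  refine le_of_mulVec_eq_smul_of_forall_le hle (hA.mulVec_eigenvectorBasis i) fun h => ?_
  exact hA.eigenvectorBasis.orthonormal.ne_zero i (by ext j; simpa using congrFun h j)

end Matrix

section Cuts

open SimpleGraph

theorem pvec_ne_zero [Nonempty V] (S : Finset V) : pvec S ≠ 0 := by
  obtain ⟨v⟩ := ‹Nonempty V›
  intro h
  have := congrFun h v
  unfold pvec at this
  split_ifs at this <;> norm_num at this

theorem pvec_dotProduct_self (S : Finset V) : pvec S ⬝ᵥ pvec S = Fintype.card V := by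
  have h : ∀ v, pvec S v * pvec S v = 1 := fun v => by unfold pvec; split_ifs <;> norm_num
  simp [dotProduct, h]

theorem cutNum_eq_sum (G : SimpleGraph V) [DecidableRel G.Adj] (S : Finset V) :
    (cutNum G S : ℝ) = ∑ i, ∑ j, if G.Adj i j ∧ i ∈ S ∧ j ∉ S then 1 else 0 := by
  rw [cutNum, Finset.natCast_card_filter, Fintype.sum_prod_type]

theorem pvec_dotProduct_mulVec_adjMatrix (G : SimpleGraph V) [DecidableRel G.Adj]
    (S : Finset V) :
    pvec S ⬝ᵥ (G.adjMatrix ℝ *ᵥ pvec S) = 2 * #G.edgeFinset - 4 * cutNum G S := by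
  have hterm : ∀ i j, (if G.Adj i j then pvec S i * pvec S j else 0) =
      (if G.Adj i j then 1 else 0) - 2 * (if G.Adj i j ∧ i ∈ S ∧ j ∉ S then 1 else 0) -
        2 * (if G.Adj j i ∧ j ∈ S ∧ i ∉ S then 1 else 0) := by
    intro i j
    by_cases hij : G.Adj i j <;> by_cases hi : i ∈ S <;> by_cases hj : j ∈ S <;>
      simp [pvec, hij, hi, hj, G.adj_comm j i] <;> norm_num
  have hedges : ∑ i : V, ∑ j : V, (if G.Adj i j then (1 : ℝ) else 0) = 2 * #G.edgeFinset := by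
    simp_rw [← degree_eq_sum_if_adj]
    exact_mod_cast G.sum_degrees_eq_twice_card_edges
  simp only [dotProduct_mulVec_adjMatrix, hterm, Finset.sum_sub_distrib, ← Finset.mul_sum]
  rw [Finset.sum_comm (f := fun i j => if G.Adj j i ∧ j ∈ S ∧ i ∉ S then (1 : ℝ) else 0),
    hedges, ← cutNum_eq_sum]
  ring

theorem mul_card_eq_of_forall_le_of_mulVec_pvec (G : SimpleGraph V) [DecidableRel G.Adj] {μ : ℝ}
    (hle : ∀ x, μ * (x ⬝ᵥ x) ≤ x ⬝ᵥ (G.adjMatrix ℝ *ᵥ x)) {S : Finset V}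
    (hS : G.adjMatrix ℝ *ᵥ pvec S = μ • pvec S) :
    μ * Fintype.card V = 2 * #G.edgeFinset - 4 * mcut G := by
  obtain ⟨T, -, hT⟩ := Finset.exists_mem_eq_sup univ univ_nonempty (cutNum G)
  have hST : cutNum G S ≤ cutNum G T := hT ▸ Finset.le_sup (mem_univ S)
  have hS' := congrArg (pvec S ⬝ᵥ ·) hS
  have hT' := hle (pvec T)
  simp only [dotProduct_smul, smul_eq_mul, pvec_dotProduct_self,
    pvec_dotProduct_mulVec_adjMatrix] at hS' hT'
  rw [mcut, hT]
  have : (cutNum G S : ℝ) ≤ cutNum G T := by exact_mod_cast hST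
  linarith

end Cuts

/-- The join of an `r₁`-regular graph on `n₁` vertices and an `r₂`-regular graph on `n₂` vertices
with `n₁ - r₂ = n₂ - r₁ > max r₁ r₂` has least adjacency eigenvalue `r₁ - n₂`, whose eigenvector is
the ±1 partition vector of the two sides; consequently it is `A`-exact. -/
theorem stmt18 {n₁ n₂ r₁ r₂ : ℕ} (H₁ : SimpleGraph (Fin n₁)) (H₂ : SimpleGraph (Fin n₂))
    [DecidableRel H₁.Adj] [DecidableRel H₂.Adj]
    (h₁ : H₁.IsRegularOfDegree r₁) (h₂ : H₂.IsRegularOfDegree r₂)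
    (heq : (n₁ : ℤ) - r₂ = (n₂ : ℤ) - r₁)
    (hgt : (n₂ : ℤ) - r₁ > max (r₁ : ℤ) (r₂ : ℤ)) :
    (⨅ i, (isHermitian_adj (joinGraph H₁ H₂)).eigenvalues i) = (r₁ : ℝ) - n₂ ∧
      (joinGraph H₁ H₂).adjMatrix ℝ *ᵥ pvec (Finset.univ.image Sum.inl) =
        ((r₁ : ℝ) - n₂) • pvec (Finset.univ.image Sum.inl) ∧
      (⨅ i, (isHermitian_adj (joinGraph H₁ H₂)).eigenvalues i) =
        2 / ((n₁ : ℝ) + n₂) *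
          (((joinGraph H₁ H₂).edgeFinset.card : ℝ) - 2 * mcut (joinGraph H₁ H₂)) := by
  have hr₁ : (r₁ : ℝ) < n₂ - r₁ := by exact_mod_cast (le_max_left _ _).trans_lt hgt
  have hr₂ : (r₂ : ℝ) < n₂ - r₁ := by exact_mod_cast (le_max_right _ _).trans_lt hgt
  have heq : (n₁ : ℝ) - r₂ = n₂ - r₁ := by exact_mod_cast heq
  have hle := SimpleGraph.joinGraph_mul_dotProduct_self_le (H₁ := H₁) (H₂ := H₂) h₁ h₂
    (by simpa using heq) (by simpa using hr₁) (by simpa using hr₂)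
  have heig := SimpleGraph.joinGraph_adjMatrix_mulVec_pvec h₁ h₂ (by simpa using heq)
  simp only [Fintype.card_fin] at hle heig
  have hn₂ : (0 : ℝ) < n₂ := by linarith [(Nat.cast_nonneg r₁ : (0 : ℝ) ≤ r₁)]
  have : Nonempty (Fin n₁ ⊕ Fin n₂) := ⟨.inr ⟨0, by exact_mod_cast hn₂⟩⟩
  have hmin := (isHermitian_adj _).iInf_eigenvalues_eq hle heig (pvec_ne_zero _)
  have hexact := mul_card_eq_of_forall_le_of_mulVec_pvec _ hle heig
  rw [Fintype.card_sum, Fintype.card_fin, Fintype.card_fin, Nat.cast_add] at hexact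
  refine ⟨hmin, heig, ?_⟩
  rw [hmin, div_mul_eq_mul_div, eq_div_iff (add_pos_of_nonneg_of_pos (Nat.cast_nonneg _) hn₂).ne']
  linarith
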